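/- arXiv:2302.02995 — 3 statements merged into one kernel-verified Lean document; each statement's English description precedes it below -/
import Mathlib

section
/- Let (P, {B_t}_{t∈V(P)}) be a path decomposition of a finite simple graph G, let s, t be nodes of P, and let s', t' be nodes on the path from s to t in P with s' lying on the path from s to t'. Then every k-linkage between B_s and B_t contains, as a subgraph, a k-linkage between B_{s'} and B_{t'}. -/
/-- A path decomposition of `G`: bags indexed by the nodes `0, …, n-1` of a path,
covering all vertices and edges, such that the set of bags containing any fixed
vertex forms a non-empty interval. -/
structure PathDecomp {V : Type*} (G : SimpleGraph V) where
  n : ℕ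
  bag : Fin n → Set V
  mem_bag : ∀ v : V, ∃ t, v ∈ bag t
  edge_bag : ∀ u v : V, G.Adj u v → ∃ t, u ∈ bag t ∧ v ∈ bag t
  convex : ∀ (v : V) (s u t : Fin n), s ≤ u → u ≤ t → v ∈ bag s → v ∈ bag t → v ∈ bag u

/-- A `k`-linkage between `A` and `B` in `G`: `k` pairwise vertex-disjoint paths,
each starting in `A` and ending in `B`. -/
structure Linkage {V : Type*} (G : SimpleGraph V) (k : ℕ) (A B : Set V) where
  first : Fin k → V
  last : Fin k → V
  walk : ∀ i, G.Walk (first i) (last i)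
  isPath : ∀ i, (walk i).IsPath
  first_mem : ∀ i, first i ∈ A
  last_mem : ∀ i, last i ∈ B
  disjoint : ∀ i j, i ≠ j → ∀ x, x ∈ (walk i).support → x ∉ (walk j).support

/-- The subgraph of `G` formed by a linkage. -/
noncomputable def Linkage.toSubgraph {V : Type*} {G : SimpleGraph V} {k : ℕ} {A B : Set V}
    (L : Linkage G k A B) : G.Subgraph :=
  ⨆ i, (L.walk i).toSubgraph


/-!
Every bag `B_b` separates `B_a` from `B_c` whenever `b` lies between `a` and `c`: each edge of a
walk lies in some bag `B_r`, and `b` lies between `a` and `r` or between `r` and `c`, so by the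
interval property either the current vertex is in `B_b` or induction applies to the rest of the
walk. Applying this twice to each path of the linkage, first to find a vertex `y ∈ B_{t'}` and
then a vertex `x ∈ B_{s'}` before `y`, cuts out a subpath from `B_{s'}` to `B_{t'}`; subpaths of
disjoint paths stay disjoint.
-/

open SimpleGraph Set

lemma SimpleGraph.Walk.IsSubwalk.toSubgraph_le {V : Type*} {G : SimpleGraph V}
    {u v u' v' : V} {p : G.Walk u v} {q : G.Walk u' v'} (h : p.IsSubwalk q) :
    p.toSubgraph ≤ q.toSubgraph := by
  obtain ⟨ru, rv, rfl⟩ := h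
  simp only [Walk.toSubgraph_append]
  exact le_sup_of_le_left le_sup_right

namespace PathDecomp

variable {V : Type*} {G : SimpleGraph V} (D : PathDecomp G)

lemma mem_bag_of_mem_uIcc {v : V} {a b c : Fin D.n} (ha : v ∈ D.bag a) (hc : v ∈ D.bag c)
    (hb : b ∈ uIcc a c) : v ∈ D.bag b := by
  rcases mem_uIcc.1 hb with ⟨hab, hbc⟩ | ⟨hcb, hba⟩
  · exact D.convex v a b c hab hbc ha hc
  · exact D.convex v c b a hcb hba hc ha

lemma exists_mem_support_mem_bag {u v : V} (W : G.Walk u v) {a b c : Fin D.n}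
    (hu : u ∈ D.bag a) (hv : v ∈ D.bag c) (hb : b ∈ uIcc a c) :
    ∃ x ∈ W.support, x ∈ D.bag b := by
  induction W generalizing a with
  | nil => exact ⟨_, Walk.start_mem_support _, D.mem_bag_of_mem_uIcc hu hv hb⟩
  | cons huw W ih =>
    obtain ⟨r, hur, hwr⟩ := D.edge_bag _ _ huw
    rcases uIcc_subset_uIcc_union_uIcc hb with hb | hb
    · exact ⟨_, Walk.start_mem_support _, D.mem_bag_of_mem_uIcc hu hur hb⟩
    · obtain ⟨x, hx, hxb⟩ := ih hwr hv hb
      exact ⟨x, Walk.support_cons _ _ ▸ List.mem_cons_of_mem _ hx, hxb⟩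

lemma exists_isSubwalk_between_bags {u v : V} (W : G.Walk u v) {a b c d : Fin D.n}
    (hu : u ∈ D.bag a) (hv : v ∈ D.bag d) (hc : c ∈ uIcc a d) (hb : b ∈ uIcc a c) :
    ∃ x ∈ D.bag b, ∃ y ∈ D.bag c, ∃ W' : G.Walk x y, W'.IsSubwalk W := by
  classical
  obtain ⟨y, hyW, hyc⟩ := D.exists_mem_support_mem_bag W hu hv hc
  obtain ⟨x, hxW, hxb⟩ := D.exists_mem_support_mem_bag (W.takeUntil y hyW) hu hyc hb
  exact ⟨x, hxb, y, hyc, _,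
    ((W.takeUntil y hyW).isSubwalk_dropUntil hxW).trans (W.isSubwalk_takeUntil hyW)⟩

end PathDecomp

lemma Linkage.exists_le_of_forall_exists_isSubwalk {V : Type*} {G : SimpleGraph V} {k : ℕ}
    {A B A' B' : Set V} (L : Linkage G k A B)
    (h : ∀ i, ∃ x ∈ A', ∃ y ∈ B', ∃ W : G.Walk x y, W.IsSubwalk (L.walk i)) :
    ∃ L' : Linkage G k A' B', L'.toSubgraph ≤ L.toSubgraph := by
  choose x hx y hy W hW using h
  refine ⟨⟨x, y, W, fun i => Walk.isPath_of_isSubwalk (hW i) (L.isPath i), hx, hy,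
    fun i j hij v hvi hvj => L.disjoint i j hij v ((hW i).support_subset hvi)
      ((hW j).support_subset hvj)⟩, iSup_mono fun i => (hW i).toSubgraph_le⟩

theorem stmt_5_general {V : Type*} (G : SimpleGraph V) (D : PathDecomp G)
    (k : ℕ) (s t s' t' : Fin D.n)
    (ht'1 : min s t ≤ t') (ht'2 : t' ≤ max s t)
    (hmid1 : min s t' ≤ s') (hmid2 : s' ≤ max s t')
    (L : Linkage G k (D.bag s) (D.bag t)) :
    ∃ L' : Linkage G k (D.bag s') (D.bag t'), L'.toSubgraph ≤ L.toSubgraph :=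
  L.exists_le_of_forall_exists_isSubwalk fun i =>
    D.exists_isSubwalk_between_bags (L.walk i) (L.first_mem i) (L.last_mem i)
      ⟨ht'1, ht'2⟩ ⟨hmid1, hmid2⟩

/-- Let `s', t'` be nodes on the path from `s` to `t` in a path decomposition, with
`s'` on the path from `s` to `t'`. Then every `k`-linkage between the bags of `s`
and `t` contains, as a subgraph, a `k`-linkage between the bags of `s'` and `t'`. -/
theorem stmt_5 {V : Type*} [Fintype V] (G : SimpleGraph V) (D : PathDecomp G)
    (k : ℕ) (s t s' t' : Fin D.n)
    (hs'1 : min s t ≤ s') (hs'2 : s' ≤ max s t)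
    (ht'1 : min s t ≤ t') (ht'2 : t' ≤ max s t)
    (hmid1 : min s t' ≤ s') (hmid2 : s' ≤ max s t')
    (L : Linkage G k (D.bag s) (D.bag t)) :
    ∃ L' : Linkage G k (D.bag s') (D.bag t'), L'.toSubgraph ≤ L.toSubgraph :=
  stmt_5_general G D k s t s' t' ht'1 ht'2 hmid1 hmid2 L
end

section
/- For every positive integer a, every finite simple graph of pathwidth strictly less than a contains no complete binary tree of height 2a as a minor. -/
/-- The width of a path decomposition: maximum bag size minus 1. -/
noncomputable def PathDecomp.width {V : Type*} {G : SimpleGraph V} (D : PathDecomp G) : ℕ :=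
  (⨆ t, (D.bag t).ncard) - 1

/-- Pathwidth: the minimum width of a path decomposition. -/
noncomputable def pathwidth {V : Type*} (G : SimpleGraph V) : ℕ :=
  sInf { w | ∃ D : PathDecomp G, D.width = w }

/-- `H` is a minor of `G`: there is a family of pairwise disjoint connected
branch sets in `G`, one for each vertex of `H`, with edges of `H` realized by
edges of `G` between the corresponding branch sets. -/
def IsMinor {W V : Type*} (H : SimpleGraph W) (G : SimpleGraph V) : Prop :=
  ∃ f : W → Set V,
    (∀ w, (SimpleGraph.induce (f w) G).Connected) ∧
    (Pairwise fun w w' => Disjoint (f w) (f w')) ∧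
    (∀ w w', H.Adj w w' → ∃ u ∈ f w, ∃ v ∈ f w', G.Adj u v)

/-- The complete binary tree of height `h`: vertices are binary strings of
length `< h`, each vertex `l` of length `< h - 1` has two children `l ++ [b]`. -/
def completeBinaryTree (h : ℕ) : SimpleGraph {l : List Bool // l.length < h} :=
  SimpleGraph.fromRel (fun u v => ∃ b : Bool, (v : List Bool) = (u : List Bool) ++ [b])

/-!
Contracting a minor model turns a path decomposition of `G` into one of the minor whose bag `t`
consists of the branch sets meeting bag `t` of `G`: connectedness of the branch sets keeps the
occurrences of each vertex an interval, and disjointness keeps the bags no larger. So pathwidth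
does not increase under minors, and it suffices that the complete binary tree of height `2a` has
pathwidth at least `a`.

For this, some bag meets the subtree below `p` in more than `a` vertices whenever `p` has at least
`2a` levels below it. Inductively, bags `t₁, t₂, t₃` meet three grandchild subtrees in more than
`a - 1` vertices each; if no bag met the subtree of `p` in more than `a` vertices, each `tᵢ` would
meet it only inside the `i`-th grandchild subtree. But one of the three, say `t₂`, lies between the
other two, and the connected set "subtree of `p` minus subtree of the second grandchild" meets
`t₁` and `t₃`, hence also `t₂`.
-/

lemma mem_uIcc_or_mem_uIcc_or_mem_uIcc {α : Type*} [LinearOrder α] (x y z : α) :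
    x ∈ Set.uIcc y z ∨ y ∈ Set.uIcc x z ∨ z ∈ Set.uIcc x y := by
  simp only [Set.mem_uIcc]
  rcases le_total x y with hxy | hyx <;> rcases le_total y z with hyz | hzy <;>
    rcases le_total x z with hxz | hzx <;> tauto

open Set

namespace PathDecomp

variable {V : Type*} {G : SimpleGraph V} (D : PathDecomp G)

lemma inter_bag_nonempty_of_walk {S : Set V} {x y : S} (w : (G.induce S).Walk x y)
    {s u t : Fin D.n} (hsu : s ≤ u) (hut : u ≤ t) (hx : (x : V) ∈ D.bag s)
    (hy : (y : V) ∈ D.bag t) : (S ∩ D.bag u).Nonempty := by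
  induction w generalizing s with
  | nil => exact ⟨_, Subtype.mem _, D.convex _ s u t hsu hut hx hy⟩
  | @cons x z y hxz w ih =>
    obtain ⟨r, hxr, hzr⟩ := D.edge_bag x z hxz
    rcases le_total u r with hur | hru
    · exact ⟨x, x.2, D.convex _ s u r hsu hur hx hxr⟩
    · exact ih hru hzr hy

lemma ordConnected_setOf_inter_bag_nonempty {S : Set V} (hS : (G.induce S).Connected) :
    OrdConnected {t | (S ∩ D.bag t).Nonempty} := by
  refine ⟨fun s ⟨x, hxS, hx⟩ t ⟨y, hyS, hy⟩ u ⟨hsu, hut⟩ => ?_⟩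
  obtain ⟨w⟩ := hS.preconnected ⟨x, hxS⟩ ⟨y, hyS⟩
  exact D.inter_bag_nonempty_of_walk w hsu hut hx hy

lemma ncard_bag_le_width_add_one (t : Fin D.n) : (D.bag t).ncard ≤ D.width + 1 := by
  have := le_ciSup (finite_range fun t => (D.bag t).ncard).bddAbove t
  unfold width
  omega

lemma pathwidth_le_width : pathwidth G ≤ D.width :=
  Nat.sInf_le ⟨D, rfl⟩

lemma exists_width_eq_pathwidth (G : SimpleGraph V) : ∃ D : PathDecomp G, D.width = pathwidth G :=
  Nat.sInf_mem (s := {w | ∃ D : PathDecomp G, D.width = w}) ⟨_, ⟨1, fun _ => univ,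
    fun _ => ⟨0, trivial⟩, fun _ _ _ => ⟨0, trivial, trivial⟩, fun _ _ _ _ _ _ _ _ => trivial⟩, rfl⟩

variable {W : Type*} {H : SimpleGraph W} {f : W → Set V}

def toMinor (hconn : ∀ w, (G.induce (f w)).Connected)
    (hedge : ∀ w w', H.Adj w w' → ∃ u ∈ f w, ∃ v ∈ f w', G.Adj u v) : PathDecomp H where
  n := D.n
  bag t := {w | (f w ∩ D.bag t).Nonempty}
  mem_bag w := by
    obtain ⟨x⟩ := (hconn w).nonempty
    obtain ⟨t, ht⟩ := D.mem_bag x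
    exact ⟨t, x, x.2, ht⟩
  edge_bag w w' hww' := by
    obtain ⟨u, hu, v, hv, huv⟩ := hedge w w' hww'
    obtain ⟨t, hut, hvt⟩ := D.edge_bag u v huv
    exact ⟨t, ⟨u, hu, hut⟩, v, hv, hvt⟩
  convex w _ _ _ hsu hut hs ht :=
    (D.ordConnected_setOf_inter_bag_nonempty (hconn w)).out hs ht ⟨hsu, hut⟩

lemma ncard_bag_toMinor_le [Finite V] (hconn : ∀ w, (G.induce (f w)).Connected)
    (hdisj : Pairwise fun w w' => Disjoint (f w) (f w'))
    (hedge : ∀ w w', H.Adj w w' → ∃ u ∈ f w, ∃ v ∈ f w', G.Adj u v) (t : Fin D.n) :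
    ((D.toMinor hconn hedge).bag t).ncard ≤ (D.bag t).ncard := by
  obtain hempty | ⟨_, x, -⟩ := ((D.toMinor hconn hedge).bag t).eq_empty_or_nonempty
  · simp [hempty]
  have : Nonempty V := ⟨x⟩
  choose! g hg using fun w (hw : (f w ∩ D.bag t).Nonempty) => hw
  refine ncard_le_ncard_of_injOn g (fun w hw => (hg w hw).2) (fun w hw w' hw' hgw => ?_)
    (toFinite _)
  by_contra hne
  exact (hdisj hne).ne_of_mem (hg w hw).1 (hg w' hw').1 hgw

lemma width_toMinor_le [Finite V] (hconn : ∀ w, (G.induce (f w)).Connected)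
    (hdisj : Pairwise fun w w' => Disjoint (f w) (f w'))
    (hedge : ∀ w w', H.Adj w w' → ∃ u ∈ f w, ∃ v ∈ f w', G.Adj u v) :
    (D.toMinor hconn hedge).width ≤ D.width :=
  Nat.sub_le_sub_right
    (ciSup_mono (finite_range _).bddAbove (D.ncard_bag_toMinor_le hconn hdisj hedge)) 1

end PathDecomp

theorem IsMinor.pathwidth_le {V W : Type*} [Finite V] {G : SimpleGraph V} {H : SimpleGraph W}
    (hHG : IsMinor H G) : pathwidth H ≤ pathwidth G := by
  obtain ⟨f, hconn, hdisj, hedge⟩ := hHG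
  obtain ⟨D, hD⟩ := PathDecomp.exists_width_eq_pathwidth G
  calc pathwidth H ≤ (D.toMinor hconn hedge).width := PathDecomp.pathwidth_le_width _
    _ ≤ D.width := D.width_toMinor_le hconn hdisj hedge
    _ = pathwidth G := hD

instance {h : ℕ} : Finite {l : List Bool // l.length < h} :=
  (List.finite_length_lt Bool h).to_subtype

namespace completeBinaryTree

variable {h : ℕ}

def subtree (p : List Bool) : Set {l : List Bool // l.length < h} :=
  {x | p <+: x.1}

def parent (x : {l : List Bool // l.length < h}) : {l : List Bool // l.length < h} :=
  ⟨x.1.dropLast, (x.1.dropLast_prefix.length_le).trans_lt x.2⟩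

lemma adj_of_eq_append {x y : {l : List Bool // l.length < h}} {b : Bool}
    (hxy : y.1 = x.1 ++ [b]) : (completeBinaryTree h).Adj x y := by
  refine (SimpleGraph.fromRel_adj _ _ _).2 ⟨fun hxy' => ?_, .inl ⟨b, hxy⟩⟩
  simpa [hxy'] using congrArg List.length hxy

lemma adj_parent {x : {l : List Bool // l.length < h}} (hx : x.1 ≠ []) :
    (completeBinaryTree h).Adj (parent x) x :=
  adj_of_eq_append (List.dropLast_append_getLast hx).symm

lemma subtree_anti {p q : List Bool} (hpq : p <+: q) :
    (subtree q : Set {l : List Bool // l.length < h}) ⊆ subtree p :=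
  fun _ hx => hpq.trans hx

lemma disjoint_subtree {p q : List Bool} (hne : p ≠ q) (hlen : p.length = q.length) :
    Disjoint (subtree p : Set {l : List Bool // l.length < h}) (subtree q) :=
  disjoint_left.2 fun _ hp hq =>
    hne ((List.prefix_of_prefix_length_le hp hq hlen.le).eq_of_length hlen)

lemma connected_induce_of_parent_mem {S : Set {l : List Bool // l.length < h}} {p : List Bool}
    (hp : p.length < h) (hpS : ⟨p, hp⟩ ∈ S) (hS : S ⊆ subtree p)
    (hparent : ∀ x ∈ S, x.1 ≠ p → parent x ∈ S) : ((completeBinaryTree h).induce S).Connected := by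
  suffices reach : ∀ n (x : S), x.1.1.length = n →
      ((completeBinaryTree h).induce S).Reachable ⟨_, hpS⟩ x from
    (SimpleGraph.connected_iff _).2
      ⟨fun x y => (reach _ x rfl).symm.trans (reach _ y rfl), ⟨⟨_, hpS⟩⟩⟩
  intro n
  induction n using Nat.strong_induction_on with
  | _ n ih =>
    rintro ⟨x, hxS⟩ rfl
    by_cases hxp : x.1 = p
    · obtain rfl : x = ⟨p, hp⟩ := Subtype.ext hxp
      rfl
    have hx : x.1 ≠ [] := by
      rintro hnil
      exact hxp (hnil.trans (List.prefix_nil.1 (hnil ▸ hS hxS)).symm)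
    have hlen : (parent x).1.length < x.1.length := by
      simpa [parent] using List.length_pos_of_ne_nil hx
    have hadj : ((completeBinaryTree h).induce S).Adj ⟨_, hparent x hxS hxp⟩ ⟨x, hxS⟩ :=
      adj_parent hx
    exact (ih _ hlen _ rfl).trans hadj.reachable

lemma connected_induce_subtree_diff {p q : List Bool} (hp : p.length < h) (hqp : ¬ q <+: p) :
    ((completeBinaryTree h).induce (subtree p \ subtree q)).Connected := by
  refine connected_induce_of_parent_mem hp ⟨List.prefix_rfl, hqp⟩ sdiff_subset
    fun x ⟨hpx, hqx⟩ hxp => ⟨?_, fun hq => hqx (hq.trans x.1.dropLast_prefix)⟩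
  have hlen : p.length ≠ x.1.length := fun hlen => hxp (hpx.eq_of_length hlen).symm
  show p <+: x.1.dropLast
  rw [List.dropLast_eq_take, List.prefix_take_iff]
  exact ⟨hpx, by have := hpx.length_le; omega⟩

end completeBinaryTree

open completeBinaryTree

namespace PathDecomp

variable {h : ℕ} (D : PathDecomp (completeBinaryTree h))

lemma inter_bag_subtree_diff_nonempty {p q₁ q₂ q₃ : List Bool} (hp : p.length < h)
    (hq₂ : ¬ q₂ <+: p) (hq₁ : p <+: q₁) (hq₃ : p <+: q₃)
    (hd₁ : Disjoint (subtree q₁ : Set {l : List Bool // l.length < h}) (subtree q₂))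
    (hd₃ : Disjoint (subtree q₃ : Set {l : List Bool // l.length < h}) (subtree q₂))
    {t₁ t₂ t₃ : Fin D.n} (ht₁ : (subtree q₁ ∩ D.bag t₁).Nonempty)
    (ht₃ : (subtree q₃ ∩ D.bag t₃).Nonempty) (ht₂ : t₂ ∈ uIcc t₁ t₃) :
    ((subtree p \ subtree q₂) ∩ D.bag t₂).Nonempty :=
  (D.ordConnected_setOf_inter_bag_nonempty (connected_induce_subtree_diff hp hq₂)).uIcc_subset
    (ht₁.mono (inter_subset_inter_left _ (subset_sdiff.2 ⟨subtree_anti hq₁, hd₁⟩)))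
    (ht₃.mono (inter_subset_inter_left _ (subset_sdiff.2 ⟨subtree_anti hq₃, hd₃⟩))) ht₂

lemma exists_lt_ncard_subtree_inter_bag {a : ℕ} (ha : 0 < a) :
    ∀ p : List Bool, p.length + 2 * a ≤ h → ∃ t, a < (subtree p ∩ D.bag t).ncard := by
  induction a, ha using Nat.le_induction with
  | base =>
    intro p hp
    let x : {l : List Bool // l.length < h} := ⟨p, by omega⟩
    let y : {l : List Bool // l.length < h} := ⟨p ++ [false], by simp; omega⟩
    have hxy : (completeBinaryTree h).Adj x y := adj_of_eq_append rfl
    obtain ⟨t, hxt, hyt⟩ := D.edge_bag x y hxy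
    refine ⟨t, ?_⟩
    calc 1 < ({x, y} : Set _).ncard := by rw [ncard_pair hxy.ne]; norm_num
      _ ≤ (subtree p ∩ D.bag t).ncard := ncard_le_ncard (insert_subset ⟨List.prefix_rfl, hxt⟩
        (singleton_subset_iff.2 ⟨List.prefix_append _ _, hyt⟩))
  | succ a ha ih =>
    intro p hp
    let g : Bool × Bool → List Bool := fun c => p ++ [c.1, c.2]
    choose t ht using fun c => ih (g c) (by simp [g]; omega)
    by_contra! hsmall
    have hsat : ∀ c, subtree p ∩ D.bag (t c) ⊆ subtree (g c) := by
      intro c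
      have hle : (subtree p ∩ D.bag (t c)).ncard ≤ (subtree (g c) ∩ D.bag (t c)).ncard := by
        have := hsmall (t c)
        have := ht c
        omega
      rw [← eq_of_subset_of_ncard_le
        (inter_subset_inter_left _ (subtree_anti (List.prefix_append _ _))) hle]
      exact inter_subset_left
    have hdisj : ∀ c c', c ≠ c' → Disjoint (subtree (g c) : Set {l : List Bool // l.length < h})
        (subtree (g c')) := fun c c' hcc' =>
      disjoint_subtree (by simpa [g, Prod.ext_iff] using hcc') (by simp [g])
    have hmiddle : ∀ c₁ c₂ c₃, c₂ ≠ c₁ → c₂ ≠ c₃ → t c₂ ∈ uIcc (t c₁) (t c₃) → False := by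
      intro c₁ c₂ c₃ h₁ h₃ ht₂
      have hg₂ : ¬ g c₂ <+: p := fun hq => by simpa [g] using hq.length_le
      obtain ⟨x, ⟨hpx, hx₂⟩, hxt⟩ := D.inter_bag_subtree_diff_nonempty (by omega) hg₂
        (List.prefix_append _ _) (List.prefix_append _ _) (hdisj _ _ h₁.symm) (hdisj _ _ h₃.symm)
        (nonempty_of_ncard_ne_zero (Nat.zero_lt_of_lt (ht c₁)).ne')
        (nonempty_of_ncard_ne_zero (Nat.zero_lt_of_lt (ht c₃)).ne') ht₂
      exact hx₂ (hsat c₂ ⟨hpx, hxt⟩)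
    rcases mem_uIcc_or_mem_uIcc_or_mem_uIcc (t (false, false)) (t (false, true))
      (t (true, false)) with hmid | hmid | hmid
    · exact hmiddle _ _ _ (by decide) (by decide) hmid
    · exact hmiddle _ _ _ (by decide) (by decide) hmid
    · exact hmiddle _ _ _ (by decide) (by decide) hmid

end PathDecomp

lemma le_pathwidth_completeBinaryTree (a : ℕ) : a ≤ pathwidth (completeBinaryTree (2 * a)) := by
  obtain rfl | ha := Nat.eq_zero_or_pos a
  · exact Nat.zero_le _
  obtain ⟨D, hD⟩ := PathDecomp.exists_width_eq_pathwidth (completeBinaryTree (2 * a))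
  obtain ⟨t, ht⟩ := D.exists_lt_ncard_subtree_inter_bag ha [] (by simp)
  have := ncard_le_ncard (inter_subset_right (s := subtree []) (t := D.bag t))
  have := D.ncard_bag_le_width_add_one t
  omega

theorem stmt_8_general {V : Type*} [Fintype V] (G : SimpleGraph V) (a : ℕ)
    (hpw : pathwidth G < a) :
    ¬ IsMinor (completeBinaryTree (2 * a)) G := fun hminor =>
  (hminor.pathwidth_le.trans_lt hpw).not_ge (le_pathwidth_completeBinaryTree a)

/-- For every positive integer `a`, every finite simple graph of pathwidth strictly
less than `a` contains no complete binary tree of height `2a` as a minor. -/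
theorem stmt_8 {V : Type*} [Fintype V] (G : SimpleGraph V) (a : ℕ) (ha : 0 < a)
    (hpw : pathwidth G < a) :
    ¬ IsMinor (completeBinaryTree (2 * a)) G :=
  stmt_8_general G a hpw
end

section
/- Let b and c be integers with b > c ≥ 1 and let a = 2^c. Let G be the graph obtained from a path on 2^{b−c} vertices by replacing each vertex with a clique on a/2 = 2^{c−1} vertices and replacing each edge by a complete bipartite graph between the two corresponding cliques (i.e., the lexicographic product of the path on 2^{b−c} vertices with the complete graph on 2^{c−1} vertices). Then the treedepth of G is at least (a/2)(b − c) = 2^{c−1}(b − c). -/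
/-- A forest order: a partial order in which the set of ancestors (predecessors)
of every element is a chain. Forest orders correspond to rooted forests, where
`le u v` means `u` is an ancestor of `v` (or `u = v`). -/
def IsForestOrder {V : Type*} (le : V → V → Prop) : Prop :=
  (∀ v, le v v) ∧ (∀ u v, le u v → le v u → u = v) ∧
  (∀ u v w, le u v → le v w → le u w) ∧
  (∀ u w v, le u v → le w v → le u w ∨ le w u)

/-- An elimination forest of `G`: a rooted forest on the vertices of `G` such that
for every edge, one endpoint is an ancestor of the other. -/
def IsElimForest {V : Type*} (G : SimpleGraph V) (le : V → V → Prop) : Prop :=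
  IsForestOrder le ∧ ∀ u v, G.Adj u v → le u v ∨ le v u

/-- The height of a rooted forest: the maximum number of vertices on a
root-to-leaf path, i.e. the maximum size of a set of ancestors of a vertex. -/
noncomputable def forestHeight {V : Type*} (le : V → V → Prop) : ℕ :=
  ⨆ v, {u | le u v}.ncard

/-- Treedepth: the minimum height of an elimination forest. -/
noncomputable def treedepth {V : Type*} (G : SimpleGraph V) : ℕ :=
  sInf { n | ∃ le : V → V → Prop, IsElimForest G le ∧ forestHeight le = n }

/-- The graph obtained from a path on `2^(b-c)` vertices by blowing up every
vertex into a clique on `2^(c-1)` vertices (the lexicographic product of the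
path on `2^(b-c)` vertices with the complete graph on `2^(c-1)` vertices). -/
def pathCliqueGraph (b c : ℕ) : SimpleGraph (Fin (2 ^ (b - c)) × Fin (2 ^ (c - 1))) :=
  SimpleGraph.fromRel (fun x y => x.1 = y.1 ∨ (x.1 : ℕ) + 1 = (y.1 : ℕ))

/-!
In an elimination forest of a connected graph the vertex set has a root, lying below every other
vertex. Repeatedly deleting the root of a vertex set `S` of `P_N[K_s]` that spans an interval of
`n` cliques keeps `S` connected until some clique is emptied; at that moment at least `s` roots
have been deleted, and the larger side spans at least `n / 2` consecutive cliques. Hence some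
vertex has at least `s * (log₂ n + 1)` ancestors, which for `n = 2 ^ (b - c)` exceeds the bound.
-/

open Finset

theorem log_le_log_add_one_of_div_le {b n n' : ℕ} (h : n / b ≤ n') :
    Nat.log b n ≤ Nat.log b n' + 1 := by
  have := Nat.log_mono_right (b := b) h
  rw [Nat.log_div_base] at this
  omega

theorem exists_Ico_half_notMem {a n k : ℕ} (hk : k ∈ Ico a (a + n)) :
    ∃ a' n', n / 2 ≤ n' ∧ Ico a' (a' + n') ⊆ Ico a (a + n) ∧ k ∉ Ico a' (a' + n') := by
  rw [mem_Ico] at hk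
  rcases le_total (a + n - 1 - k) (k - a) with h | h
  · exact ⟨a, k - a, by omega, Ico_subset_Ico le_rfl (by omega), by simp; omega⟩
  · exact ⟨k + 1, a + n - 1 - k, by omega, Ico_subset_Ico (by omega) (by omega), by simp⟩

section ElimForest

variable {V : Type*} {G : SimpleGraph V} {le : V → V → Prop}

theorem exists_isElimForest (G : SimpleGraph V) : ∃ le, IsElimForest G le := by
  let := IsWellOrder.linearOrder (WellOrderingRel (α := V))
  exact ⟨(· ≤ ·), ⟨fun _ => le_rfl, fun _ _ => le_antisymm, fun _ _ _ => le_trans,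
    fun u w _ _ _ => le_total u w⟩, fun u v _ => le_total u v⟩

theorem ncard_le_forestHeight [Finite V] (le : V → V → Prop) (v : V) :
    {u | le u v}.ncard ≤ forestHeight le :=
  le_ciSup (f := fun w => {u | le u w}.ncard) (Set.finite_range _).bddAbove v

theorem le_treedepth {k : ℕ} (h : ∀ le, IsElimForest G le → k ≤ forestHeight le) :
    k ≤ treedepth G := by
  obtain ⟨le, hle⟩ := exists_isElimForest G
  refine le_csInf ⟨_, le, hle, rfl⟩ ?_
  rintro _ ⟨le, hle, rfl⟩
  exact h le hle

theorem IsElimForest.exists_forall_le_of_connected (hle : IsElimForest G le) {S : Finset V}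
    (hS : (G.induce (S : Set V)).Connected) : ∃ m ∈ S, ∀ v ∈ S, le m v := by
  obtain ⟨⟨hrefl, -, htrans, hfork⟩, hedge⟩ := hle
  let : LE V := ⟨le⟩
  have : IsTrans V (fun u v => v ≤ u) := ⟨fun _ _ _ h₁ h₂ => htrans _ _ _ h₂ h₁⟩
  obtain ⟨⟨r, hr⟩⟩ := hS.nonempty
  obtain ⟨m, hmS, hmin⟩ := Finset.exists_minimal ⟨r, hr⟩
  have hclosed : ∀ u w, le m u → w ∈ S → G.Adj u w → le m w := fun u w hmu hw huw => by
    rcases hedge u w huw with huw | hwu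
    · exact htrans _ _ _ hmu huw
    · exact (hfork m w u hmu hwu).elim id fun hwm => hmin hw hwm
  refine ⟨m, hmS, fun v hv => by_contra fun hmv => ?_⟩
  obtain ⟨p⟩ := hS.preconnected ⟨m, hmS⟩ ⟨v, hv⟩
  obtain ⟨d, -, hd, hd'⟩ := p.exists_boundary_dart {x | le m x.1} (hrefl m) hmv
  exact hd' (hclosed _ _ hd d.snd.2 d.adj)

theorem card_filter_lt_card_filter_of_mem_of_notMem {S T : Finset V} {m v : V}
    [DecidablePred (le · v)] (hTS : T ⊆ S) (hm : m ∈ S) (hmT : m ∉ T) (hmv : le m v) :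
    #{u ∈ T | le u v} < #{u ∈ S | le u v} :=
  card_lt_card ⟨filter_subset_filter _ hTS,
    fun h => hmT (mem_filter.1 (h (mem_filter.2 ⟨hm, hmv⟩))).1⟩

end ElimForest

/-- `P_N[K_s]`; `pathCliqueGraph b c` is `pathBlowup (2 ^ (b - c)) (2 ^ (c - 1))` by definition. -/
def pathBlowup (N s : ℕ) : SimpleGraph (Fin N × Fin s) :=
  SimpleGraph.fromRel (fun x y => x.1 = y.1 ∨ (x.1 : ℕ) + 1 = (y.1 : ℕ))

namespace pathBlowup

variable {N s : ℕ}

theorem adj_of_fst_eq {x y : Fin N × Fin s} (hne : x ≠ y) (h : x.1 = y.1) :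
    (pathBlowup N s).Adj x y :=
  (SimpleGraph.fromRel_adj _ _ _).2 ⟨hne, .inl (.inl h)⟩

theorem adj_of_succ {x y : Fin N × Fin s} (h : (x.1 : ℕ) + 1 = y.1) :
    (pathBlowup N s).Adj x y :=
  (SimpleGraph.fromRel_adj _ _ _).2 ⟨fun hxy => by simp [hxy] at h, .inl (.inr h)⟩

def columns (S : Finset (Fin N × Fin s)) : Finset ℕ :=
  S.image fun v => v.1

theorem mem_columns {S : Finset (Fin N × Fin s)} {k : ℕ} :
    k ∈ columns S ↔ ∃ v ∈ S, (v.1 : ℕ) = k :=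
  mem_image

theorem columns_univ (hs : 0 < s) :
    columns (univ : Finset (Fin N × Fin s)) = Ico 0 (0 + N) := by
  ext k
  simp only [mem_columns, mem_univ, true_and, zero_add, mem_Ico, zero_le]
  exact ⟨fun ⟨x, hx⟩ => hx ▸ x.1.2, fun hk => ⟨(⟨k, hk⟩, ⟨0, hs⟩), rfl⟩⟩

theorem columns_erase {S : Finset (Fin N × Fin s)} {m v : Fin N × Fin s} (hv : v ∈ S)
    (hvm : v ≠ m) (h : v.1 = m.1) : columns (S.erase m) = columns S := by
  ext k
  simp only [mem_columns, mem_erase]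
  refine ⟨fun ⟨w, ⟨_, hw⟩, hwk⟩ => ⟨w, hw, hwk⟩, fun ⟨w, hw, hwk⟩ => ?_⟩
  by_cases hwm : w = m
  · exact ⟨v, ⟨hvm, hv⟩, by rw [h, ← hwm, hwk]⟩
  · exact ⟨w, ⟨hwm, hw⟩, hwk⟩

theorem card_le_mul_card_columns (S : Finset (Fin N × Fin s)) : #S ≤ s * #(columns S) := by
  refine card_le_mul_card_image S s fun k _ => ?_
  calc #{v ∈ S | (v.1 : ℕ) = k} ≤ #(univ : Finset (Fin s)) :=
        card_le_card_of_injOn Prod.snd (fun _ _ => mem_coe.2 (mem_univ _)) fun v hv w hw h =>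
          Prod.ext (Fin.ext ((mem_filter.1 hv).2.trans (mem_filter.1 hw).2.symm)) h
    _ = s := by simp

theorem induce_connected {S : Finset (Fin N × Fin s)} {a n : ℕ} (hn : 0 < n)
    (hS : columns S = Ico a (a + n)) : ((pathBlowup N s).induce (S : Set _)).Connected := by
  have hcol : ∀ k, a ≤ k → k < a + n → ∃ v ∈ S, (v.1 : ℕ) = k := fun k h₁ h₂ =>
    mem_columns.1 (hS ▸ mem_Ico.2 ⟨h₁, h₂⟩)
  have hbound : ∀ v ∈ S, (v.1 : ℕ) < a + n := fun v hv =>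
    (mem_Ico.1 (hS ▸ mem_columns.2 ⟨v, hv, rfl⟩)).2
  obtain ⟨r, hr, hra⟩ := hcol a le_rfl (by omega)
  refine (SimpleGraph.connected_iff_exists_forall_reachable _).2 ⟨⟨r, hr⟩, ?_⟩
  suffices h : ∀ k, ∀ v (hv : v ∈ S), (v.1 : ℕ) = a + k →
      ((pathBlowup N s).induce (S : Set _)).Reachable ⟨r, hr⟩ ⟨v, hv⟩ by
    rintro ⟨v, hv⟩
    have := mem_Ico.1 (hS ▸ mem_columns.2 ⟨v, hv, rfl⟩)
    exact h ((v.1 : ℕ) - a) v hv (by omega)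
  have hreach : ∀ {x y} (hx : x ∈ S) (hy : y ∈ S), (pathBlowup N s).Adj x y →
      ((pathBlowup N s).induce (S : Set _)).Reachable ⟨x, hx⟩ ⟨y, hy⟩ :=
    fun _ _ h => SimpleGraph.Adj.reachable h
  intro k
  induction k with
  | zero =>
    intro v hv hva
    by_cases hrv : r = v
    · subst hrv; rfl
    · exact hreach hr hv (adj_of_fst_eq hrv (Fin.ext (hra.trans hva.symm)))
  | succ k ih =>
    intro v hv hva
    obtain ⟨w, hw, hwk⟩ := hcol (a + k) (by omega) (by have := hbound v hv; omega)
    exact (ih w hw hwk).trans (hreach hw hv (adj_of_succ (by omega)))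

/-- The part of `S` outside `S' ∪ {m}` lies in the other `n - n' - 1` cliques. -/
theorem exists_half_of_unique {S : Finset (Fin N × Fin s)} {a n : ℕ}
    (hS : columns S = Ico a (a + n)) (hn : 2 ≤ n) {m : Fin N × Fin s} (hm : m ∈ S)
    (hunique : ∀ v ∈ S, v.1 = m.1 → v = m) :
    ∃ S' ⊆ S, m ∉ S' ∧ ∃ a' n', 0 < n' ∧ columns S' = Ico a' (a' + n') ∧
      Nat.log 2 n ≤ Nat.log 2 n' + 1 ∧ #S + s * (n' + 1) ≤ #S' + 1 + s * n := by
  have hmcol : (m.1 : ℕ) ∈ Ico a (a + n) := hS ▸ mem_columns.2 ⟨m, hm, rfl⟩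
  obtain ⟨a', n', hhalf, hsub, hmI⟩ := exists_Ico_half_notMem hmcol
  set I := Ico a' (a' + n')
  have hn' : n' + 1 ≤ n := by
    have := card_le_card (insert_subset hmcol hsub)
    rw [card_insert_of_notMem hmI] at this
    simpa [I] using this
  set S' := S.filter fun v => (v.1 : ℕ) ∈ I
  set R := (S.filter fun v => (v.1 : ℕ) ∉ I).erase m
  have hcolS' : columns S' = I := by
    ext k
    simp only [mem_columns, S', mem_filter]
    refine ⟨fun ⟨v, ⟨_, hvI⟩, hvk⟩ => hvk ▸ hvI, fun hk => ?_⟩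
    obtain ⟨v, hv, hvk⟩ := mem_columns.1 (hS ▸ hsub hk)
    exact ⟨v, ⟨hv, hvk ▸ hk⟩, hvk⟩
  have hcolR : columns R ⊆ (Ico a (a + n) \ I).erase m.1 := by
    intro k hk
    obtain ⟨v, hv, rfl⟩ := mem_columns.1 hk
    obtain ⟨hvm, hvS, hvI⟩ : v ≠ m ∧ v ∈ S ∧ (v.1 : ℕ) ∉ I := by
      simpa [R, and_assoc] using hv
    refine mem_erase.2 ⟨fun h => hvm (hunique v hvS (Fin.ext h)), mem_sdiff.2 ⟨?_, hvI⟩⟩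
    exact hS ▸ mem_columns.2 ⟨v, hvS, rfl⟩
  have hcardR : #R ≤ s * (n - n' - 1) := by
    calc #R ≤ s * #(columns R) := card_le_mul_card_columns R
      _ ≤ s * #((Ico a (a + n) \ I).erase m.1) := Nat.mul_le_mul_left s (card_le_card hcolR)
      _ = s * (n - n' - 1) := by
        rw [card_erase_of_mem (mem_sdiff.2 ⟨hmcol, hmI⟩), card_sdiff_of_subset hsub]
        simp [I]
  have hcardS : #S ≤ #S' + 1 + #R := by
    have h₁ : #S' + #{v ∈ S | (v.1 : ℕ) ∉ I} = #S := card_filter_add_card_filter_not _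
    have h₂ : #{v ∈ S | (v.1 : ℕ) ∉ I} - 1 ≤ #R := pred_card_le_card_erase
    omega
  refine ⟨S', filter_subset _ _, fun h => hmI (mem_filter.1 h).2, a', n', by omega, hcolS',
    log_le_log_add_one_of_div_le hhalf, ?_⟩
  have : s * (n - n' - 1) + s * (n' + 1) = s * n := by
    rw [← mul_add]; congr 1; omega
  omega

variable {le : Fin N × Fin s → Fin N × Fin s → Prop}

open scoped Classical in
/-- `s * n - #S` counts the vertices missing from the cliques spanned by `S`; it pays for the
roots deleted before some clique is emptied. -/
theorem exists_card_ancestors_ge (hle : IsElimForest (pathBlowup N s) le)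
    (S : Finset (Fin N × Fin s)) {a n : ℕ} (hn : 0 < n) (hS : columns S = Ico a (a + n)) :
    ∃ v ∈ S, s * (Nat.log 2 n + 1) + #S ≤ #{u ∈ S | le u v} + s * n := by
  induction S using Finset.strongInduction generalizing a n with
  | H S ih =>
  obtain ⟨m, hmS, hmin⟩ := hle.exists_forall_le_of_connected (induce_connected hn hS)
  by_cases hcov : columns (S.erase m) = Ico a (a + n)
  · obtain ⟨v, hv, hvS⟩ := ih _ (erase_ssubset hmS) hn hcov
    have := card_filter_lt_card_filter_of_mem_of_notMem (erase_subset m S) hmS (notMem_erase m S)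
      (hmin v (mem_of_mem_erase hv))
    have := card_erase_add_one hmS
    exact ⟨v, mem_of_mem_erase hv, by omega⟩
  have hunique : ∀ v ∈ S, v.1 = m.1 → v = m := fun v hv h =>
    by_contra fun hvm => hcov (columns_erase hv hvm h ▸ hS)
  rcases (show n = 1 ∨ 2 ≤ n by omega) with rfl | hn
  · have hcol : ∀ v ∈ S, (v.1 : ℕ) = a := fun v hv => by
      have := mem_Ico.1 (hS ▸ mem_columns.2 ⟨v, hv, rfl⟩); omega
    have hS1 : #S ≤ 1 := card_le_one.2 fun v hv w hw =>
      (hunique v hv (Fin.ext ((hcol v hv).trans (hcol m hmS).symm))).trans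
        (hunique w hw (Fin.ext ((hcol w hw).trans (hcol m hmS).symm))).symm
    have hm : 0 < #{u ∈ S | le u m} := card_pos.2 ⟨m, mem_filter.2 ⟨hmS, hle.1.1 m⟩⟩
    exact ⟨m, hmS, by simp only [Nat.log_one_right]; omega⟩
  obtain ⟨S', hS'S, hmS', a', n', hn', hS', hlog, hcard⟩ :=
    exists_half_of_unique hS hn hmS hunique
  obtain ⟨v, hv, hvS'⟩ :=
    ih S' (ssubset_of_subset_of_ne hS'S (by rintro rfl; exact hmS' hmS)) hn' hS'
  have := card_filter_lt_card_filter_of_mem_of_notMem hS'S hmS hmS' (hmin v (hS'S hv))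
  have : s * (Nat.log 2 n + 1) ≤ s * (Nat.log 2 n' + 1) + s := by
    rw [← mul_add_one]; exact Nat.mul_le_mul_left s (by omega)
  have : s * (n' + 1) = s * n' + s := mul_add_one s n'
  exact ⟨v, hS'S hv, by omega⟩

end pathBlowup

theorem stmt_10_general (b c : ℕ) :
    2 ^ (c - 1) * (b - c) ≤ treedepth (pathCliqueGraph b c) := by
  classical
  refine le_treedepth fun le hle => ?_
  obtain ⟨v, -, hv⟩ := pathBlowup.exists_card_ancestors_ge hle univ (Nat.two_pow_pos (b - c))
    (pathBlowup.columns_univ (Nat.two_pow_pos _))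
  rw [Nat.log_pow Nat.one_lt_two, card_univ, Fintype.card_prod, Fintype.card_fin,
    Fintype.card_fin] at hv
  calc 2 ^ (c - 1) * (b - c) ≤ 2 ^ (c - 1) * (b - c + 1) := Nat.mul_le_mul_left _ (Nat.le_succ _)
    _ ≤ #{u | le u v} := by rw [mul_comm (2 ^ (b - c))] at hv; omega
    _ = {u | le u v}.ncard := by rw [← Set.ncard_coe_finset]; simp
    _ ≤ forestHeight le := ncard_le_forestHeight le v

/-- For integers `b > c ≥ 1` and `a = 2^c`, the lexicographic product of the path on
`2^(b-c)` vertices with the complete graph on `a/2 = 2^(c-1)` vertices has treedepth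
at least `(a/2)(b-c) = 2^(c-1) * (b-c)`. -/
theorem stmt_10 (b c : ℕ) (hc : 1 ≤ c) (hbc : c < b) :
    2 ^ (c - 1) * (b - c) ≤ treedepth (pathCliqueGraph b c) :=
  stmt_10_general b c
end
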